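/- The polynomials P_λ satisfy the recursion formulae: if λ1 ≥ 1 then P_λ(s,t) = P_{λ+(−1,0)}(s,t) − s·t·P_{λ+(−1,−1)}(s,t) − t·P_{λ+(−2,1)}(s,t), and if λ2 ≥ 1 then P_λ(s,t) = P_{λ+(0,−1)}(s,t) − s·t·P_{λ+(−1,−1)}(s,t) − s·P_{λ+(1,−2)}(s,t), where by convention P_μ = 0 whenever μ ∉ ℕ₀². Moreover P_{(λ1,λ2)}(t,s) = P_{(λ2,λ1)}(s,t) for all λ ∈ ℕ₀². -/

import Mathlib

/-!
Under `s = x/y²`, `t = y/x²` the monomial `s^i t^j` becomes the Laurent monomial `x^(i-2j) y^(j-2i)`,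
and `(i, j) ↦ (i - 2j, j - 2i)` is injective; clearing denominators by `(xy)^(2N)` shows that
`p ↦ p(s, t)` is injective. Each identity between the `P_λ` may thus be checked in the fraction
field, where the first recursion is the recursion `x Q_{λ-(1,0)} = Q_λ + Q_{λ-(1,1)} + Q_{λ-(2,-1)}`
divided by `x^λ₁ y^λ₂`. The automorphism `x ↔ y` swaps `s` and `t`, which gives the symmetry, and
turns the first recursion into the second.
-/

open MvPolynomial

noncomputable section

abbrev Rxy : Type := MvPolynomial (Fin 2) ℤ

/-- The fraction field of ℤ[x,y]. -/
abbrev Kxy : Type := FractionRing Rxy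

/-- The image of `x` in the fraction field. -/
noncomputable def xx : Kxy := algebraMap Rxy Kxy (X 0)

/-- The image of `y` in the fraction field. -/
noncomputable def yy : Kxy := algebraMap Rxy Kxy (X 1)

/-- `s = x / y²`. -/
noncomputable def sv : Kxy := xx / yy ^ 2

/-- `t = y / x²`. -/
noncomputable def tv : Kxy := yy / xx ^ 2

/-- Evaluation of a two-variable integer polynomial at `(s, t)` in the fraction field. -/
noncomputable def evST (p : Rxy) : Kxy := aeval ![sv, tv] p

/-- Defining properties of the SU(3) character polynomials `Q a b`
(with the convention `Q a b = 0` whenever `(a, b) ∉ ℕ₀²`). -/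
def IsQSU3 (Q : ℤ → ℤ → Rxy) : Prop :=
  (∀ a b : ℤ, (a < 0 ∨ b < 0) → Q a b = 0) ∧
  Q 0 0 = 1 ∧
  Q 1 0 = X 0 ∧
  (∀ a b : ℤ, 0 ≤ a → 0 ≤ b →
    X 0 * Q a b = Q (a + 1) b + Q a (b - 1) + Q (a - 1) (b + 1)) ∧
  (∀ a b : ℤ, rename (Equiv.swap (0 : Fin 2) 1) (Q a b) = Q b a)

/-- Defining property of the polynomials `P a b` (in the variables `s, t`), namely
`P_λ(x/y², y/x²) = x^{-λ₁} y^{-λ₂} Q_λ(x,y)` in the fraction field of ℤ[x,y]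
(with the convention `P a b = 0` whenever `(a, b) ∉ ℕ₀²`). -/
def IsPSU3 (Q P : ℤ → ℤ → Rxy) : Prop :=
  (∀ a b : ℤ, (a < 0 ∨ b < 0) → P a b = 0) ∧
  (∀ a b : ℤ, 0 ≤ a → 0 ≤ b →
    evST (P a b) = algebraMap Rxy Kxy (Q a b) / (xx ^ a * yy ^ b))

theorem xx_ne_zero : xx ≠ 0 := by
  simp [xx]

theorem yy_ne_zero : yy ≠ 0 := by
  simp [yy]

theorem aeval_monomial_fin_two {A : Type*} [CommRing A] [Algebra ℤ A] (f : Fin 2 → A)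
    (d : Fin 2 →₀ ℕ) (c : ℤ) :
    aeval f (monomial d c) = c * (f 0 ^ d 0 * f 1 ^ d 1) := by
  rw [aeval_monomial, Finsupp.prod_fintype _ _ fun _ => pow_zero _, Fin.prod_univ_two, eq_intCast]

theorem algebraMap_eq_aeval (p : Rxy) : algebraMap Rxy Kxy p = aeval ![xx, yy] p := by
  induction p using MvPolynomial.induction_on with
  | C c => simp
  | add p q hp hq => simp [hp, hq]
  | mul_X p i hp => fin_cases i <;> simp [hp, xx, yy]

theorem le_totalDegree_of_mem_support {σ R : Type*} [CommSemiring R] {p : MvPolynomial σ R}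
    {d : σ →₀ ℕ} (hd : d ∈ p.support) (i : σ) :
    d i ≤ p.totalDegree :=
  (monomial_le_degreeOf i hd).trans (degreeOf_le_totalDegree p i)

-- The exponent of `(xy)^(2N) s^(d 0) t^(d 1)`; the truncated subtractions are exact once
-- `d 0, d 1 ≤ N`.
def clearedExp (N : ℕ) (d : Fin 2 →₀ ℕ) : Fin 2 →₀ ℕ :=
  Finsupp.single 0 (2 * N + d 0 - 2 * d 1) + Finsupp.single 1 (2 * N + d 1 - 2 * d 0)

theorem clearedExp_apply_zero (N : ℕ) (d : Fin 2 →₀ ℕ) :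
    clearedExp N d 0 = 2 * N + d 0 - 2 * d 1 := by
  simp [clearedExp]

theorem clearedExp_apply_one (N : ℕ) (d : Fin 2 →₀ ℕ) :
    clearedExp N d 1 = 2 * N + d 1 - 2 * d 0 := by
  simp [clearedExp]

theorem clearedExp_injOn (N : ℕ) : Set.InjOn (clearedExp N) {d | d 0 ≤ N ∧ d 1 ≤ N} := by
  rintro d ⟨hd0, hd1⟩ d' ⟨hd0', hd1'⟩ h
  have h0 := congrArg (· 0) h
  have h1 := congrArg (· 1) h
  simp only [clearedExp_apply_zero, clearedExp_apply_one] at h0 h1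
  exact Finsupp.ext (Fin.forall_fin_two.mpr ⟨by omega, by omega⟩)

theorem pow_mul_sv_pow_mul_tv_pow {N i j : ℕ} (hi : i ≤ N) (hj : j ≤ N) :
    (xx * yy) ^ (2 * N) * (sv ^ i * tv ^ j)
      = xx ^ (2 * N + i - 2 * j) * yy ^ (2 * N + j - 2 * i) := by
  set m := 2 * N + i - 2 * j
  set n := 2 * N + j - 2 * i
  have hm : 2 * N + i = m + 2 * j := by omega
  have hn : 2 * N + j = n + 2 * i := by omega
  have := xx_ne_zero
  have := yy_ne_zero
  calc (xx * yy) ^ (2 * N) * (sv ^ i * tv ^ j)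
      = xx ^ (2 * N + i) * yy ^ (2 * N + j) / (xx ^ (2 * j) * yy ^ (2 * i)) := by
        simp only [sv, tv, div_pow, ← pow_mul]; field_simp; ring
    _ = xx ^ m * yy ^ n := by
        rw [hm, hn, pow_add, pow_add]; field_simp

def clearDenoms (p : Rxy) : Rxy :=
  ∑ d ∈ p.support, monomial (clearedExp p.totalDegree d) (p.coeff d)

theorem algebraMap_clearDenoms (p : Rxy) :
    algebraMap Rxy Kxy (clearDenoms p) = (xx * yy) ^ (2 * p.totalDegree) * evST p := by
  conv_rhs => enter [2]; rw [p.as_sum]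
  rw [clearDenoms, map_sum, evST, map_sum, Finset.mul_sum]
  refine Finset.sum_congr rfl fun d hd => ?_
  rw [algebraMap_eq_aeval, aeval_monomial_fin_two, aeval_monomial_fin_two]
  simp only [Matrix.cons_val_zero, Matrix.cons_val_one]
  rw [clearedExp_apply_zero, clearedExp_apply_one, ← pow_mul_sv_pow_mul_tv_pow
    (le_totalDegree_of_mem_support hd 0) (le_totalDegree_of_mem_support hd 1)]
  ring

theorem coeff_clearDenoms {p : Rxy} {d : Fin 2 →₀ ℕ} (hd : d ∈ p.support) :
    coeff (clearedExp p.totalDegree d) (clearDenoms p) = p.coeff d := by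
  have hbox : ∀ d ∈ p.support,
      d ∈ {d : Fin 2 →₀ ℕ | d 0 ≤ p.totalDegree ∧ d 1 ≤ p.totalDegree} :=
    fun d hd => ⟨le_totalDegree_of_mem_support hd 0, le_totalDegree_of_mem_support hd 1⟩
  rw [clearDenoms, coeff_sum, Finset.sum_eq_single d]
  · rw [coeff_monomial, if_pos rfl]
  · intro d' hd' hne
    rw [coeff_monomial, if_neg fun h => hne ((clearedExp_injOn _) (hbox d' hd') (hbox d hd) h)]
  · exact fun h => absurd hd h

theorem evST_injective : Function.Injective evST := by
  refine (injective_iff_map_eq_zero (aeval (R := ℤ) ![sv, tv])).mpr fun p hp => ?_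
  change evST p = 0 at hp
  have hq : clearDenoms p = 0 :=
    IsFractionRing.injective Rxy Kxy (by rw [algebraMap_clearDenoms, hp, mul_zero, map_zero])
  ext d
  by_contra hd
  rw [← coeff_clearDenoms (mem_support_iff.mpr hd), hq, coeff_zero] at hd
  exact hd rfl

def swapXY : Kxy ≃+* Kxy :=
  IsFractionRing.ringEquivOfRingEquiv (renameEquiv ℤ (Equiv.swap (0 : Fin 2) 1)).toRingEquiv

theorem swapXY_algebraMap (p : Rxy) :
    swapXY (algebraMap Rxy Kxy p) = algebraMap Rxy Kxy (rename (Equiv.swap (0 : Fin 2) 1) p) :=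
  IsFractionRing.ringEquivOfRingEquiv_algebraMap _ p

theorem swapXY_xx : swapXY xx = yy := by
  rw [xx, swapXY_algebraMap, rename_X, Equiv.swap_apply_left, yy]

theorem swapXY_yy : swapXY yy = xx := by
  rw [yy, swapXY_algebraMap, rename_X, Equiv.swap_apply_right, xx]

theorem evST_rename_swap (p : Rxy) :
    evST (rename (Equiv.swap (0 : Fin 2) 1) p) = swapXY (evST p) := by
  rw [evST, evST, aeval_rename, ← RingEquiv.coe_toRingHom, map_aeval, aeval_eq_eval₂Hom]
  congr 2
  · exact RingHom.ext_int _ _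
  · funext i
    fin_cases i <;> simp [sv, tv, swapXY_xx, swapXY_yy]

theorem div_zpow_eq_of_mul_eq {K : Type*} [Field K] {x y : K} (hx : x ≠ 0) (hy : y ≠ 0) (a b : ℤ)
    {q q₁ q₂ q₃ : K} (h : x * q₁ = q + q₂ + q₃) :
    q / (x ^ a * y ^ b) = q₁ / (x ^ (a - 1) * y ^ b)
      - x / y ^ 2 * (y / x ^ 2) * (q₂ / (x ^ (a - 1) * y ^ (b - 1)))
      - y / x ^ 2 * (q₃ / (x ^ (a - 2) * y ^ (b + 1))) := by
  rw [zpow_sub₀ hx, zpow_sub₀ hx, zpow_sub₀ hy, zpow_add₀ hy]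
  have := zpow_ne_zero a hx
  have := zpow_ne_zero b hy
  field_simp
  linear_combination -h

namespace IsPSU3

variable {Q P : ℤ → ℤ → Rxy}

theorem evST_eq (hQ : IsQSU3 Q) (hP : IsPSU3 Q P) (a b : ℤ) :
    evST (P a b) = algebraMap Rxy Kxy (Q a b) / (xx ^ a * yy ^ b) := by
  by_cases hab : a < 0 ∨ b < 0
  · simp [hP.1 a b hab, hQ.1 a b hab, evST]
  · rw [not_or, not_lt, not_lt] at hab
    exact hP.2 a b hab.1 hab.2

theorem rename_swap (hQ : IsQSU3 Q) (hP : IsPSU3 Q P) (a b : ℤ) :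
    rename (Equiv.swap (0 : Fin 2) 1) (P a b) = P b a := by
  apply evST_injective
  rw [evST_rename_swap, hP.evST_eq hQ, hP.evST_eq hQ, map_div₀, map_mul, map_zpow₀, map_zpow₀,
    swapXY_xx, swapXY_yy, swapXY_algebraMap, hQ.2.2.2.2, mul_comm]

theorem eq_rec_fst (hQ : IsQSU3 Q) (hP : IsPSU3 Q P) {a b : ℤ} (ha : 1 ≤ a) (hb : 0 ≤ b) :
    P a b = P (a - 1) b - X 0 * X 1 * P (a - 1) (b - 1) - X 1 * P (a - 2) (b + 1) := by
  have hrec := hQ.2.2.2.1 (a - 1) b (by omega) hb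
  rw [sub_add_cancel, sub_sub, one_add_one_eq_two] at hrec
  have hev := hP.evST_eq hQ
  unfold evST at hev
  apply evST_injective
  simp only [evST, map_sub, map_mul, aeval_X, hev, Matrix.cons_val_zero, Matrix.cons_val_one]
  exact div_zpow_eq_of_mul_eq xx_ne_zero yy_ne_zero a b
    (by rw [xx, ← map_mul, ← map_add, ← map_add, hrec])

theorem eq_rec_snd (hQ : IsQSU3 Q) (hP : IsPSU3 Q P) {a b : ℤ} (ha : 0 ≤ a) (hb : 1 ≤ b) :
    P a b = P a (b - 1) - X 0 * X 1 * P (a - 1) (b - 1) - X 0 * P (a + 1) (b - 2) := by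
  have h := congrArg (rename (Equiv.swap (0 : Fin 2) 1)) (hP.eq_rec_fst hQ hb ha)
  simp only [map_sub, map_mul, rename_X, Equiv.swap_apply_left, Equiv.swap_apply_right,
    hP.rename_swap hQ] at h
  rw [h]
  ring

end IsPSU3

theorem stmt_3 (Q P : ℤ → ℤ → Rxy) (hQ : IsQSU3 Q) (hP : IsPSU3 Q P) :
    (∀ a b : ℤ, 1 ≤ a → 0 ≤ b →
      P a b = P (a - 1) b - X 0 * X 1 * P (a - 1) (b - 1) - X 1 * P (a - 2) (b + 1)) ∧
    (∀ a b : ℤ, 0 ≤ a → 1 ≤ b →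
      P a b = P a (b - 1) - X 0 * X 1 * P (a - 1) (b - 1) - X 0 * P (a + 1) (b - 2)) ∧
    (∀ a b : ℤ, 0 ≤ a → 0 ≤ b →
      rename (Equiv.swap (0 : Fin 2) 1) (P a b) = P b a) :=
  ⟨fun _ _ ha hb => hP.eq_rec_fst hQ ha hb, fun _ _ ha hb => hP.eq_rec_snd hQ ha hb,
    fun a b _ _ => hP.rename_swap hQ a b⟩
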